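/- Let K be a symmetric convex body in ℝⁿ (K = −K), let x ∈ int K, and y ∈ ℝⁿ \ {0}. Then the supremum defining b*_K(x,y) is already achieved by centered ellipses: b*_K(x,y) = sup{ b > 0 : (cos θ)·x + b(sin θ)·y ∈ K for all θ ∈ ℝ }. -/
import Mathlib


/-- A convex body in ℝⁿ: a compact convex set with nonempty interior. -/
def IsConvexBody {n : ℕ} (K : Set (EuclideanSpace ℝ (Fin n))) : Prop :=
  IsCompact K ∧ Convex ℝ K ∧ (interior K).Nonempty

/-- The ellipse with parameters `(a, b)` through `x` in direction `y`,
`θ ↦ (cos θ)•a + b(sin θ)•y + (x - a)`, is inscribed in `K`. -/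
def InscribedEllipse {n : ℕ} (K : Set (EuclideanSpace ℝ (Fin n)))
    (x y a : EuclideanSpace ℝ (Fin n)) (b : ℝ) : Prop :=
  ∀ θ : ℝ, (Real.cos θ) • a + (b * Real.sin θ) • y + (x - a) ∈ K

/-- `b*_K(x,y)`: the supremum of `b > 0` such that some ellipse with parameters
`(a,b)` through `x` in direction `y` is inscribed in `K`. -/
noncomputable def bStar {n : ℕ} (K : Set (EuclideanSpace ℝ (Fin n)))
    (x y : EuclideanSpace ℝ (Fin n)) : ℝ :=
  sSup { b : ℝ | 0 < b ∧ ∃ a, InscribedEllipse K x y a b }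

/-- For a symmetric convex body, the supremum defining b*_K(x,y) is already achieved by
ellipses centered at the origin (i.e. with a = x). -/
theorem stmt_13 {n : ℕ} (hn : 1 ≤ n) (K : Set (EuclideanSpace ℝ (Fin n)))
    (hK : IsConvexBody K) (hsym : K = -K) (x y : EuclideanSpace ℝ (Fin n))
    (hx : x ∈ interior K) (hy : y ≠ 0) :
    bStar K x y =
      sSup { b : ℝ | 0 < b ∧
        ∀ θ : ℝ, (Real.cos θ) • x + (b * Real.sin θ) • y ∈ K } := by
  unfold bStar
  congr 1
  ext b
  simp only [Set.mem_setOf_eq]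
  constructor
  · rintro ⟨hb, a, h⟩
    refine ⟨hb, fun θ => ?_⟩
    have h1 : (Real.cos θ) • a + (b * Real.sin θ) • y + (x - a) ∈ K := h θ
    have h2 : -((Real.cos (θ + Real.pi)) • a + (b * Real.sin (θ + Real.pi)) • y + (x - a)) ∈ K := by
      rw [hsym]
      exact Set.neg_mem_neg.mpr (h (θ + Real.pi))
    have hc1 : (0:ℝ) ≤ (1 + Real.cos θ) / 2 := by
      have := Real.neg_one_le_cos θ; linarith
    have hc2 : (0:ℝ) ≤ (1 - Real.cos θ) / 2 := by
      have := Real.cos_le_one θ; linarith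
    have hsum : (1 + Real.cos θ) / 2 + (1 - Real.cos θ) / 2 = 1 := by ring
    have := hK.2.1 h1 h2 hc1 hc2 hsum
    convert this using 1
    simp only [Real.cos_add_pi, Real.sin_add_pi]
    module
  · rintro ⟨hb, h⟩
    refine ⟨hb, x, fun θ => ?_⟩
    convert h θ using 1
    module
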